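/- arXiv:2003.13211 — 3 statements merged into one kernel-verified Lean document; each statement's English description precedes it below -/
import Mathlib

section
/- Conversely, if A is a 4×4 matrix over an algebraically closed field k of characteristic p with det(A) = 0 and A ≠ 0, then the polynomial F(x) = Σ_{l,m} A_{lm} x_l x_m^q and all its partial derivatives have a common nontrivial zero, i.e. the Hermitian surface X_A is singular. -/
open Matrix Finset

/-!
Take a nonzero vector `v` in the kernel of `A` and, `k` being algebraically closed, a vector `x`
with `x_m ^ q = v_m`. Then the partial derivatives `Σ_m A_{lm} x_m ^ q = (A v)_l` vanish, and
`F(x) = Σ_l x_l ∂_l F(x)` vanishes with them.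
-/

theorem IsAlgClosed.exists_pi_pow_eq {ι k : Type*} [Field k] [IsAlgClosed k] {q : ℕ}
    (hq : 0 < q) (v : ι → k) : ∃ x : ι → k, ∀ m, x m ^ q = v m :=
  ⟨fun m => Classical.choose (IsAlgClosed.exists_pow_nat_eq (v m) hq),
    fun m => Classical.choose_spec (IsAlgClosed.exists_pow_nat_eq (v m) hq)⟩

theorem ne_zero_of_pow_eq_of_ne_zero {ι k : Type*} [MonoidWithZero k]
    {q : ℕ} (hq : 0 < q) {x v : ι → k} (hx : ∀ m, x m ^ q = v m) (hv : v ≠ 0) : x ≠ 0 := by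
  rintro rfl
  exact hv (funext fun m => by rw [← hx m, Pi.zero_apply, zero_pow hq.ne'])

theorem sum_mul_mul_pow_eq_zero_of_forall {ι k : Type*} [Fintype ι] [CommSemiring k] (q : ℕ)
    (A : Matrix ι ι k) (x : ι → k) (hx : ∀ l, ∑ m, A l m * x m ^ q = 0) :
    ∑ l, ∑ m, A l m * x l * x m ^ q = 0 :=
  calc ∑ l, ∑ m, A l m * x l * x m ^ q = ∑ l, x l * ∑ m, A l m * x m ^ q := by
        refine sum_congr rfl fun l _ => ?_
        rw [mul_sum]
        exact sum_congr rfl fun m _ => by ring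
    _ = 0 := by simp only [hx, mul_zero, sum_const_zero]

theorem hermitian_surface_singular_of_det_eq_zero_general (p n q : ℕ) (hp : p.Prime)
    (hq : q = p ^ n) (k : Type*) [Field k] [IsAlgClosed k]
    (A : Matrix (Fin 4) (Fin 4) k) (hdet : A.det = 0) :
    ∃ x : Fin 4 → k, x ≠ 0 ∧
      (∑ l : Fin 4, ∑ m : Fin 4, A l m * x l * (x m) ^ q = 0) ∧
      (∀ l : Fin 4, ∑ m : Fin 4, A l m * (x m) ^ q = 0) := by
  have hq0 : 0 < q := hq ▸ pow_pos hp.pos n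
  obtain ⟨v, hv0, hAv⟩ := exists_mulVec_eq_zero_iff.2 hdet
  obtain ⟨x, hx⟩ := IsAlgClosed.exists_pi_pow_eq hq0 v
  have hderiv : ∀ l, ∑ m, A l m * x m ^ q = 0 := fun l => by
    simpa only [hx, mulVec, dotProduct, Pi.zero_apply] using congrFun hAv l
  exact ⟨x, ne_zero_of_pow_eq_of_ne_zero hq0 hx hv0,
    sum_mul_mul_pow_eq_zero_of_forall q A x hderiv, hderiv⟩

/-- If `A ≠ 0` is a singular `4×4` matrix over an algebraically closed field `k` of
characteristic `p`, then the Hermitian form `F(x) = Σ A_{lm} x_l x_m^q` and all its partial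
derivatives `x ↦ Σ_m A_{lm} x_m^q` have a common nontrivial zero, i.e. the Hermitian
surface `X_A` is singular. -/
theorem hermitian_surface_singular_of_det_eq_zero (p n q : ℕ) (hp : p.Prime) (hn : 0 < n)
    (hq : q = p ^ n) (k : Type*) [Field k] [IsAlgClosed k] [CharP k p]
    (A : Matrix (Fin 4) (Fin 4) k) (hdet : A.det = 0) (hA : A ≠ 0) :
    ∃ x : Fin 4 → k, x ≠ 0 ∧
      (∑ l : Fin 4, ∑ m : Fin 4, A l m * x l * (x m) ^ q = 0) ∧
      (∀ l : Fin 4, ∑ m : Fin 4, A l m * (x m) ^ q = 0) :=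
  hermitian_surface_singular_of_det_eq_zero_general p n q hp hq k A hdet
end

section
/- Let q be an odd prime power, d = (q+1)q/2, i = (q+1)/2, j = (q^2+1)/2, and M the 4×4 matrix with rows (0,1,0,0),(0,0,0,1),(0,0,-1,0),(-1,0,0,0) over a field of characteristic p dividing q. Then with v = (s^d, s^{d-i}t^i, s^{d-j}t^j, t^d), the polynomial transpose(v) · M · v^{(q)} vanishes identically in s,t. -/
/-!
Write `q = 2m + 1`. Then `d = (m+1)q`, `i = m+1`, `j = 2m² + 2m + 1`, `d - i = 2m(m+1)` and
`d - j = m`, and the form `vᵀ M v^(q)` equals `(v₀v₁^q - v₃v₀^q) + (v₁v₃^q - v₂^(q+1))`.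
Both brackets vanish because each is a difference of two equal monomials in `s, t`: the
exponents agree as polynomials in `m`.
-/

open Matrix

section OddExponents

variable (m : ℕ)

theorem succ_mul_div_two_of_odd : (2 * m + 1 + 1) * (2 * m + 1) / 2 = (m + 1) * (2 * m + 1) := by
  rw [show 2 * m + 1 + 1 = 2 * (m + 1) by ring, mul_assoc, Nat.mul_div_cancel_left _ two_pos]

theorem succ_div_two_of_odd : (2 * m + 1 + 1) / 2 = m + 1 := by omega

theorem sq_succ_div_two_of_odd : ((2 * m + 1) ^ 2 + 1) / 2 = 2 * m ^ 2 + 2 * m + 1 := by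
  rw [show (2 * m + 1) ^ 2 + 1 = 2 * (2 * m ^ 2 + 2 * m + 1) by ring,
    Nat.mul_div_cancel_left _ two_pos]

theorem succ_mul_odd_sub_succ : (m + 1) * (2 * m + 1) - (m + 1) = 2 * m ^ 2 + 2 * m :=
  Nat.sub_eq_of_eq_add (by ring)

theorem succ_mul_odd_sub_sq : (m + 1) * (2 * m + 1) - (2 * m ^ 2 + 2 * m + 1) = m :=
  Nat.sub_eq_of_eq_add (by ring)

end OddExponents

theorem hermitianForm_apply {R : Type*} [CommRing R] (v w : Fin 4 → R) (q : ℕ) :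
    ∑ l : Fin 4, ∑ m : Fin 4, !![(0:R),1,0,0; 0,0,0,1; 0,0,-1,0; -1,0,0,0] l m * v l * w m ^ q =
      (v 0 * w 1 ^ q - v 3 * w 0 ^ q) + (v 1 * w 3 ^ q - v 2 * w 2 ^ q) := by
  simp only [Fin.sum_univ_four, of_apply, cons_val', cons_val_fin_one, cons_val_zero, cons_val_one,
    cons_val]
  ring

section Tetranomial

variable {R : Type*} [CommMonoid R] (m : ℕ) (s t : R)

theorem tetranomial_outer_terms_eq :
    s ^ ((m + 1) * (2 * m + 1)) * (s ^ (2 * m ^ 2 + 2 * m) * t ^ (m + 1)) ^ (2 * m + 1) =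
      t ^ ((m + 1) * (2 * m + 1)) * (s ^ ((m + 1) * (2 * m + 1))) ^ (2 * m + 1) := by
  simp only [mul_pow, ← pow_mul]
  rw [← mul_assoc, ← pow_add, mul_comm]
  congr 2
  ring

theorem tetranomial_inner_terms_eq :
    s ^ (2 * m ^ 2 + 2 * m) * t ^ (m + 1) * (t ^ ((m + 1) * (2 * m + 1))) ^ (2 * m + 1) =
      s ^ m * t ^ (2 * m ^ 2 + 2 * m + 1) * (s ^ m * t ^ (2 * m ^ 2 + 2 * m + 1)) ^ (2 * m + 1) := by
  simp only [mul_pow, ← pow_mul]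
  rw [mul_mul_mul_comm, ← pow_add, ← pow_add, mul_assoc, ← pow_add]
  congr 2 <;> ring

end Tetranomial

theorem curve_C_q_odd_on_hermitian_general (q : ℕ) (hodd : Odd q) (k : Type*) [Field k] (s t : k) :
    ∑ l : Fin 4, ∑ m : Fin 4,
        (!![(0:k),1,0,0; 0,0,0,1; 0,0,-1,0; -1,0,0,0] l m) *
          (![s ^ ((q+1)*q/2), s ^ ((q+1)*q/2 - (q+1)/2) * t ^ ((q+1)/2),
             s ^ ((q+1)*q/2 - (q^2+1)/2) * t ^ ((q^2+1)/2), t ^ ((q+1)*q/2)] l) *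
          (![s ^ ((q+1)*q/2), s ^ ((q+1)*q/2 - (q+1)/2) * t ^ ((q+1)/2),
             s ^ ((q+1)*q/2 - (q^2+1)/2) * t ^ ((q^2+1)/2), t ^ ((q+1)*q/2)] m) ^ q = 0 := by
  obtain ⟨m, rfl⟩ := hodd
  rw [hermitianForm_apply, succ_mul_div_two_of_odd, succ_div_two_of_odd, sq_succ_div_two_of_odd,
    succ_mul_odd_sub_succ, succ_mul_odd_sub_sq]
  simp only [cons_val_zero, cons_val_one, cons_val_two, cons_val_three, head_cons, tail_cons]
  rw [tetranomial_outer_terms_eq, tetranomial_inner_terms_eq, sub_self, sub_self, add_zero]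

/-- For `q` an odd prime power, with `d = (q+1)q/2`, `i = (q+1)/2`, `j = (q^2+1)/2`, the
tetranomial curve `C(d, i, j)` lies on the Hermitian surface given by the matrix with rows
`(0,1,0,0),(0,0,0,1),(0,0,-1,0),(-1,0,0,0)` over a field of characteristic `p` dividing `q`. -/
theorem curve_C_q_odd_on_hermitian (p n q : ℕ) (hp : p.Prime) (hn : 0 < n)
    (hq : q = p ^ n) (hodd : Odd q) (k : Type*) [Field k] [CharP k p] (s t : k) :
    ∑ l : Fin 4, ∑ m : Fin 4,
        (!![(0:k),1,0,0; 0,0,0,1; 0,0,-1,0; -1,0,0,0] l m) *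
          (![s ^ ((q+1)*q/2), s ^ ((q+1)*q/2 - (q+1)/2) * t ^ ((q+1)/2),
             s ^ ((q+1)*q/2 - (q^2+1)/2) * t ^ ((q^2+1)/2), t ^ ((q+1)*q/2)] l) *
          (![s ^ ((q+1)*q/2), s ^ ((q+1)*q/2 - (q+1)/2) * t ^ ((q+1)/2),
             s ^ ((q+1)*q/2 - (q^2+1)/2) * t ^ ((q^2+1)/2), t ^ ((q+1)*q/2)] m) ^ q = 0 :=
  curve_C_q_odd_on_hermitian_general q hodd k s t
end

section
/- Let q ≡ 3 (mod 4) be an integer with q ≥ 3. For an integer n, the divisibility (q^3+1)(q+1)/2 ∣ n(q^2−1) holds if and only if (q^3+1)/4 ∣ n. -/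
/-!
Write `q = 4b - 1`. Then `(q³+1)/4 = b c` with `c = q² - q + 1 = 16b² - 12b + 3`,
`(q³+1)(q+1)/2 = 8b · bc` and `n(q² - 1) = 8b · n(2b - 1)`. Cancelling `8b` reduces the claim to
`bc ∣ n(2b - 1) ↔ bc ∣ n`, which holds because `bc` and `2b - 1 = (q - 1)/2` are coprime.
-/

theorem isCoprime_mul_quadratic_two_mul_sub_one {R : Type*} [CommRing R] (b : R) :
    IsCoprime (b * (16 * b ^ 2 - 12 * b + 3)) (2 * b - 1) :=
  IsCoprime.mul_left ⟨2, -1, by ring⟩ ⟨1, -(8 * b - 2), by ring⟩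

theorem stabilizer_divisibility_q_three_mod_four_general (q : ℕ) (hmod : q % 4 = 3)
    (n : ℤ) :
    (((q : ℤ) ^ 3 + 1) * ((q : ℤ) + 1) / 2 ∣ n * ((q : ℤ) ^ 2 - 1)) ↔
      ((q : ℤ) ^ 3 + 1) / 4 ∣ n := by
  obtain ⟨b, hqb, hb⟩ : ∃ b : ℤ, (q : ℤ) = 4 * b - 1 ∧ 0 < b := ⟨q / 4 + 1, by omega, by omega⟩
  set c : ℤ := 16 * b ^ 2 - 12 * b + 3
  have hA : ((q : ℤ) ^ 3 + 1) / 4 = b * c := by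
    rw [show (q : ℤ) ^ 3 + 1 = 4 * (b * c) by rw [hqb]; ring]
    exact Int.mul_ediv_cancel_left _ (by norm_num)
  have hL : ((q : ℤ) ^ 3 + 1) * ((q : ℤ) + 1) / 2 = 8 * b * (b * c) := by
    rw [show ((q : ℤ) ^ 3 + 1) * ((q : ℤ) + 1) = 2 * (8 * b * (b * c)) by rw [hqb]; ring]
    exact Int.mul_ediv_cancel_left _ (by norm_num)
  have hR : n * ((q : ℤ) ^ 2 - 1) = 8 * b * (n * (2 * b - 1)) := by rw [hqb]; ring
  rw [hA, hL, hR, mul_dvd_mul_iff_left (by positivity)]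
  exact ⟨(isCoprime_mul_quadratic_two_mul_sub_one b).dvd_of_dvd_mul_right,
    fun h => h.mul_right _⟩

/-- For `q ≡ 3 (mod 4)`, `q ≥ 3`, and an integer `n`:
`(q^3+1)(q+1)/2 ∣ n(q^2−1)` iff `(q^3+1)/4 ∣ n`. -/
theorem stabilizer_divisibility_q_three_mod_four (q : ℕ) (hq : 3 ≤ q) (hmod : q % 4 = 3)
    (n : ℤ) :
    (((q : ℤ) ^ 3 + 1) * ((q : ℤ) + 1) / 2 ∣ n * ((q : ℤ) ^ 2 - 1)) ↔
      ((q : ℤ) ^ 3 + 1) / 4 ∣ n :=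
  stabilizer_divisibility_q_three_mod_four_general q hmod n
end
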